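/- arXiv:1311.7352 — 3 statements merged into one kernel-verified Lean document; each statement's English description precedes it below -/
import Mathlib

section
/- For every k > 0, the generalized Cesàro operator C_k on ℓ² satisfies C_k Q C_k* = C_k* P C_k, where Q = diag{k,1,1,1,...} and P = diag{(k+i)/(k+i+1) : i ≥ 0}. -/
/-!
Both sides have matrix entries `1 / (k + max i m)`. On the left this is a finite computation:
`(C_k Q C_k*)_{im} = (k + min i m) / ((k + i) (k + m))`, the weight `k` of `Q` at `0` being exactly
what turns `∑_{j ≤ min i m} Q_j` into `k + min i m`. On the right the factor `(k+i)/(k+i+1)` of `P`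
makes `(C_k* P C_k)_{im} = ∑_{n ≥ max i m} 1 / ((k + n) (k + n + 1))` telescope to the same value.
Bounded operators agreeing on the basis vectors of `ℓ²` are equal.
-/

open Filter Topology ContinuousLinearMap
open scoped lp InnerProductSpace

theorem hasSum_inv_add_mul_add_one {c : ℝ} (hc : 0 < c) :
    HasSum (fun n : ℕ => ((c + n) * (c + n + 1))⁻¹) c⁻¹ := by
  rw [hasSum_iff_tendsto_nat_of_nonneg fun n => by positivity]
  have partial_sum : ∀ n : ℕ,
      ∑ i ∈ Finset.range n, ((c + i) * (c + i + 1))⁻¹ = c⁻¹ - (c + n)⁻¹ := by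
    intro n
    have telescope := Finset.sum_range_sub' (fun i : ℕ => (c + i)⁻¹) n
    rw [Nat.cast_zero, add_zero] at telescope
    rw [← telescope]
    refine Finset.sum_congr rfl fun i _ => ?_
    have : 0 < c + i := by positivity
    push_cast
    field_simp
    ring
  simp only [partial_sum]
  have : Tendsto (fun n : ℕ => (c + n)⁻¹) atTop (𝓝 0) :=
    (tendsto_atTop_add_const_left atTop c tendsto_natCast_atTop_atTop).inv_tendsto_atTop
  simpa using tendsto_const_nhds.sub this

theorem ofReal_add_natCast_ne_zero {k : ℝ} (hk : 0 < k) (i : ℕ) : (k : ℂ) + i ≠ 0 := by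
  exact_mod_cast (by positivity : 0 < k + i).ne'

theorem hasSum_ite_le_inv_add_mul_add_one {k : ℝ} (hk : 0 < k) (M : ℕ) :
    HasSum (fun i : ℕ => if M ≤ i then (((k : ℂ) + i) * ((k : ℂ) + i + 1))⁻¹ else 0)
      ((k : ℂ) + M)⁻¹ := by
  have tail : HasSum (fun n : ℕ => (((k : ℂ) + (n + M : ℕ)) * ((k : ℂ) + (n + M : ℕ) + 1))⁻¹)
      ((k : ℂ) + M)⁻¹ := by
    have := Complex.hasSum_ofReal.2 (hasSum_inv_add_mul_add_one (by positivity : 0 < k + M))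
    convert this using 2 with n
    · push_cast; ring
    · push_cast; ring
  have head : ∑ i ∈ Finset.range M, (if M ≤ i then (((k : ℂ) + i) * ((k : ℂ) + i + 1))⁻¹ else 0)
      = 0 :=
    Finset.sum_eq_zero fun i hi => if_neg (by simpa using hi)
  rw [← hasSum_nat_add_iff' M, head, sub_zero]
  simpa using tail

theorem lp.apply_eq_inner_single {ι 𝕜 : Type*} [DecidableEq ι] [RCLike 𝕜] (x : ℓ²(ι, 𝕜))
    (j : ι) : x j = ⟪lp.single 2 j (1 : 𝕜), x⟫_𝕜 := by
  simp [lp.inner_single_left]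

theorem sum_range_interrupter (k : ℂ) (n : ℕ) :
    ∑ j ∈ Finset.range (n + 1), (if j = 0 then k else 1) = k + n := by
  simp [Finset.sum_range_succ', add_comm]

def IsCesaroOperator (k : ℝ) (C : ℓ²(ℕ, ℂ) →L[ℂ] ℓ²(ℕ, ℂ)) : Prop :=
  ∀ f : ℓ²(ℕ, ℂ), ∀ i : ℕ, C f i = (∑ j ∈ Finset.range (i + 1), f j) / ((k : ℂ) + (i : ℂ))

def IsDiagonalOperator (d : ℕ → ℂ) (T : ℓ²(ℕ, ℂ) →L[ℂ] ℓ²(ℕ, ℂ)) : Prop :=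
  ∀ f : ℓ²(ℕ, ℂ), ∀ i : ℕ, T f i = d i * f i

variable {k : ℝ} {C : ℓ²(ℕ, ℂ) →L[ℂ] ℓ²(ℕ, ℂ)}

namespace IsCesaroOperator

theorem apply_single (hC : IsCesaroOperator k C) (m : ℕ) (a : ℂ) (i : ℕ) :
    C (lp.single 2 m a) i = if m ≤ i then a / (k + i) else 0 := by
  rw [hC]
  simp [Pi.single_apply, Finset.sum_ite_eq', ite_div]

theorem adjoint_apply_single (hC : IsCesaroOperator k C) (m : ℕ) (a : ℂ) (j : ℕ) :
    adjoint C (lp.single 2 m a) j = if j ≤ m then a / (k + m) else 0 := by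
  rw [lp.apply_eq_inner_single, adjoint_inner_right, lp.inner_single_right, hC.apply_single]
  split_ifs <;> simp [Complex.conj_ofReal, div_eq_mul_inv, mul_comm]

theorem apply_interrupter_adjoint_single (hk : 0 < k) (hC : IsCesaroOperator k C)
    {Q : ℓ²(ℕ, ℂ) →L[ℂ] ℓ²(ℕ, ℂ)}
    (hQ : IsDiagonalOperator (fun i => if i = 0 then (k : ℂ) else 1) Q)
    (m : ℕ) (a : ℂ) (i : ℕ) :
    C (Q (adjoint C (lp.single 2 m a))) i = a / (k + (max i m : ℕ)) := by
  have entries : ∀ j, Q (adjoint C (lp.single 2 m a)) j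
      = if j ≤ m then (if j = 0 then (k : ℂ) else 1) * (a / (k + m)) else 0 := by
    intro j
    rw [hQ, hC.adjoint_apply_single, mul_ite, mul_zero]
  have partial_sum : ∑ j ∈ Finset.range (i + 1), Q (adjoint C (lp.single 2 m a)) j
      = (k + (min i m : ℕ)) * (a / (k + m)) := by
    have : (Finset.range (i + 1)).filter (· ≤ m) = Finset.range (min i m + 1) := by
      ext j
      simp only [Finset.mem_filter, Finset.mem_range]
      omega
    rw [Finset.sum_congr rfl fun j _ => entries j, ← Finset.sum_filter, this, ← Finset.sum_mul,
      sum_range_interrupter]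
  have := ofReal_add_natCast_ne_zero hk i
  have := ofReal_add_natCast_ne_zero hk m
  rw [hC, partial_sum]
  rcases le_total i m with h | h
  · rw [min_eq_left h, max_eq_right h]
    field_simp
  · rw [min_eq_right h, max_eq_left h]
    field_simp

theorem adjoint_apply_diagonal_apply_single (hk : 0 < k) (hC : IsCesaroOperator k C)
    {P : ℓ²(ℕ, ℂ) →L[ℂ] ℓ²(ℕ, ℂ)}
    (hP : IsDiagonalOperator (fun i => (k + i) / (k + i + 1)) P)
    (m : ℕ) (a : ℂ) (j : ℕ) :
    adjoint C (P (C (lp.single 2 m a))) j = a / (k + (max j m : ℕ)) := by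
  have terms : ∀ i, ⟪C (lp.single 2 j 1) i, P (C (lp.single 2 m a)) i⟫_ℂ
      = a * if max j m ≤ i then (((k : ℂ) + i) * ((k : ℂ) + i + 1))⁻¹ else 0 := by
    intro i
    have := ofReal_add_natCast_ne_zero hk i
    have : (k : ℂ) + i + 1 ≠ 0 := by simpa [add_assoc] using ofReal_add_natCast_ne_zero hk (i + 1)
    rw [hP, hC.apply_single, hC.apply_single]
    by_cases hj : j ≤ i <;> by_cases hm : m ≤ i <;> simp [hj, hm, Complex.conj_ofReal]
    field_simp
  rw [lp.apply_eq_inner_single, adjoint_inner_right, lp.inner_eq_tsum, tsum_congr terms,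
    ((hasSum_ite_le_inv_add_mul_add_one hk _).mul_left a).tsum_eq, div_eq_mul_inv]

end IsCesaroOperator

open IsCesaroOperator in
/-- For k > 0, C_k Q C_k* = C_k* P C_k where Q = diag{k,1,1,...} and
P = diag{(k+i)/(k+i+1)}. -/
theorem cesaro_interrupter_identity (k : ℝ) (hk : 0 < k)
    (C Q P : lp (fun _ : ℕ => ℂ) 2 →L[ℂ] lp (fun _ : ℕ => ℂ) 2)
    (hC : ∀ f : lp (fun _ : ℕ => ℂ) 2, ∀ i : ℕ,
      C f i = (∑ j ∈ Finset.range (i + 1), f j) / ((k : ℂ) + (i : ℂ)))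
    (hQ : ∀ f : lp (fun _ : ℕ => ℂ) 2, ∀ i : ℕ,
      Q f i = (if i = 0 then (k : ℂ) else 1) * f i)
    (hP : ∀ f : lp (fun _ : ℕ => ℂ) 2, ∀ i : ℕ,
      P f i = (((k : ℂ) + (i : ℂ)) / ((k : ℂ) + (i : ℂ) + 1)) * f i) :
    C ∘L Q ∘L adjoint C = adjoint C ∘L P ∘L C := by
  refine lp.ext_continuousLinearMap (by norm_num) fun m =>
    ContinuousLinearMap.ext fun a => lp.ext <| funext fun i => ?_
  simp only [comp_apply, lp.singleContinuousLinearMap_apply]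
  rw [apply_interrupter_adjoint_single hk hC hQ, adjoint_apply_diagonal_apply_single hk hC hP]
end

section
/- A unilateral weighted shift W on ℓ² with nonzero first weight w₀ and some zero weight wₙ = 0 (n > 0) satisfies neither ker W ⊆ ker W* nor ker W* ⊆ ker W; consequently W is not supraposinormal. -/
/-!
On the basis vectors, `W eₖ = wₖ eₖ₊₁`, `W* e₀ = 0` and `W* eₖ₊₁ = conj wₖ eₖ`. Hence `eₙ` lies in
`ker W` but not in `ker W*`, since `wₙ = 0 ≠ wₙ₋₁`, while `e₀` lies in `ker W*` but not in
`ker W`, since `w₀ ≠ 0`.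
-/

open ContinuousLinearMap

namespace lp

theorem single_eq_zero_iff {α : Type*} {E : α → Type*} [∀ i, NormedAddCommGroup (E i)]
    [DecidableEq α] {p : ENNReal} {i : α} {a : E i} : lp.single p i a = 0 ↔ a = 0 := by
  refine ⟨fun h => ?_, fun h => h ▸ lp.single_zero p i⟩
  simpa [lp.single_apply_self] using congr_arg (fun f : lp E p => f i) h

end lp

section WeightedShift

variable {𝕜 : Type*} [RCLike 𝕜]

/-- `W` is the unilateral weighted shift `W eₘ = wₘ eₘ₊₁` on `ℓ²(ℕ)`. -/
def IsWeightedShift (w : ℕ → 𝕜) (W : lp (fun _ : ℕ => 𝕜) 2 →L[𝕜] lp (fun _ : ℕ => 𝕜) 2) :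
    Prop :=
  (∀ f, W f 0 = 0) ∧ ∀ f m, W f (m + 1) = w m * f m

variable {w : ℕ → 𝕜} {W : lp (fun _ : ℕ => 𝕜) 2 →L[𝕜] lp (fun _ : ℕ => 𝕜) 2}

namespace IsWeightedShift

theorem apply_single (hW : IsWeightedShift w W) (k : ℕ) (c : 𝕜) :
    W (lp.single 2 k c) = lp.single 2 (k + 1) (w k * c) := by
  ext j
  rcases j with _ | m
  · simp [hW.1]
  · rw [hW.2]
    rcases eq_or_ne m k with rfl | hmk
    · simp
    · simp [hmk]

theorem adjoint_single_zero (hW : IsWeightedShift w W) (c : 𝕜) :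
    adjoint W (lp.single 2 0 c) = 0 :=
  ext_inner_right 𝕜 fun f => by
    rw [adjoint_inner_left, lp.inner_single_left, hW.1, inner_zero_left, inner_zero_right]

theorem adjoint_single_succ (hW : IsWeightedShift w W) (k : ℕ) (c : 𝕜) :
    adjoint W (lp.single 2 (k + 1) c) = lp.single 2 k (starRingEnd 𝕜 (w k) * c) :=
  ext_inner_right 𝕜 fun f => by
    rw [adjoint_inner_left, lp.inner_single_left, lp.inner_single_left, hW.2]
    simp only [RCLike.inner_apply, map_mul, RCLike.conj_conj]
    ring

end IsWeightedShift

end WeightedShift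

/-- A unilateral weighted shift with w₀ ≠ 0 and some minimal zero weight wₙ = 0
(n > 0) satisfies neither ker W ⊆ ker W* nor ker W* ⊆ ker W; hence W is not
supraposinormal. -/
theorem noninjective_weighted_shift_not_supraposinormal
    (w : ℕ → ℂ) (n : ℕ) (hn : 0 < n) (hw0 : w 0 ≠ 0) (hwn : w n = 0)
    (hmin : ∀ m < n, w m ≠ 0)
    (W : lp (fun _ : ℕ => ℂ) 2 →L[ℂ] lp (fun _ : ℕ => ℂ) 2)
    (hW0 : ∀ f : lp (fun _ : ℕ => ℂ) 2, W f 0 = 0)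
    (hWs : ∀ f : lp (fun _ : ℕ => ℂ) 2, ∀ m : ℕ, W f (m + 1) = w m * f m) :
    ¬ (LinearMap.ker (W : lp (fun _ : ℕ => ℂ) 2 →ₗ[ℂ] lp (fun _ : ℕ => ℂ) 2) ≤
      LinearMap.ker (adjoint W : lp (fun _ : ℕ => ℂ) 2 →ₗ[ℂ] lp (fun _ : ℕ => ℂ) 2)) ∧
    ¬ (LinearMap.ker (adjoint W : lp (fun _ : ℕ => ℂ) 2 →ₗ[ℂ] lp (fun _ : ℕ => ℂ) 2) ≤
      LinearMap.ker (W : lp (fun _ : ℕ => ℂ) 2 →ₗ[ℂ] lp (fun _ : ℕ => ℂ) 2)) := by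
  have hW : IsWeightedShift w W := ⟨hW0, hWs⟩
  obtain ⟨k, rfl⟩ : ∃ k, n = k + 1 := Nat.exists_eq_add_one.mpr hn
  refine ⟨fun hle => ?_, fun hle => ?_⟩
  · have hker : W (lp.single 2 (k + 1) 1) = 0 := by
      rw [hW.apply_single, hwn, zero_mul, lp.single_zero]
    have hker_adj := hle hker
    rw [LinearMap.mem_ker, coe_coe, hW.adjoint_single_succ, lp.single_eq_zero_iff] at hker_adj
    simp [hmin k k.lt_succ_self] at hker_adj
  · have hker := hle (hW.adjoint_single_zero 1)
    rw [LinearMap.mem_ker, coe_coe, hW.apply_single, lp.single_eq_zero_iff] at hker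
    simp [hw0] at hker
end

section
/- Let M = M({aᵢ},{cⱼ}) be a bounded factorable matrix on ℓ² with aᵢ, cⱼ > 0, a_k/c_k strictly decreasing to 0, and (a_k c_k)/(a_{k+1} c_{k+1}) bounded. If there exists δ > 0 such that c₀a₀ ≤ δ and (1/δ)(a_k/c_k)(δ − c_k a_k) ≤ a_{k+1}/c_{k+1} ≤ (δ·a_k/c_k)/(δ + c_{k+1}²·a_k/c_k) for every k ≥ 0, then M is hyponormal. -/
/-!
Write `u k = a k / c k`. The two inequalities of `hineq` say `δ (u k - u (k+1)) ≤ a k ^ 2` and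
`c (k+1) ^ 2 u k u (k+1) ≤ δ (u k - u (k+1))`. For `x` supported in `[0, N)` put
`T k = ∑_{k ≤ i < N} a i x i` and `S k = ∑_{j < k} c j x j`, so that `‖M* x‖² = ∑ c k ^ 2 ‖T k‖²`,
while `‖M x‖² ≥ ∑_{k < N} a k ^ 2 ‖S (k+1)‖² + δ u N ‖S N‖²` because `∑_{i ≥ N} a i ^ 2`
dominates the telescoping sum of `δ (u i - u (i+1))`, which is `δ u N`.
The quantity `Φ k = δ / u k ‖T k + u k S k‖² - c k ^ 2 ‖T k‖²` drops by at most
`a k ^ 2 ‖S (k+1)‖² - c k ^ 2 ‖T k‖²` from `k` to `k + 1`: after clearing denominators the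
slack is a combination of two squares with the nonnegative coefficients
`δ (u k - u (k+1)) - c (k+1) ^ 2 u k u (k+1)` and `a k ^ 2 - δ (u k - u (k+1))`. As `Φ 0 ≥ 0` (from `c 0 a 0 ≤ δ`) and `Φ N = δ u N ‖S N‖²`,
summing gives `‖M* x‖ ≤ ‖M x‖` for finitely supported `x`, hence for all `x` by density.
-/

open ContinuousLinearMap Filter Finset
open scoped lp ENNReal

section Quadratic

variable {E : Type*} [NormedAddCommGroup E] [InnerProductSpace ℝ E]

lemma quadratic_step {δ u v α β : ℝ} (hu : 0 < u) (hv : 0 < v)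
    (hα : δ * (u - v) ≤ α ^ 2) (hβ : β ^ 2 * (u * v) ≤ δ * (u - v)) (w s : E) :
    δ / u * ‖w‖ ^ 2 + β ^ 2 * ‖w - u • s‖ ^ 2 ≤
      α ^ 2 * ‖s‖ ^ 2 + δ / v * ‖w - (u - v) • s‖ ^ 2 := by
  have norm_sub_smul_sq (r : ℝ) :
      ‖w - r • s‖ ^ 2 = ‖w‖ ^ 2 - 2 * r * inner ℝ w s + r ^ 2 * ‖s‖ ^ 2 := by
    rw [norm_sub_sq_real, inner_smul_right, norm_smul, mul_pow, Real.norm_eq_abs, sq_abs]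
    ring
  have key : (α ^ 2 * ‖s‖ ^ 2 + δ / v * ‖w - (u - v) • s‖ ^ 2
      - (δ / u * ‖w‖ ^ 2 + β ^ 2 * ‖w - u • s‖ ^ 2)) * (u * v) =
      (δ * (u - v) - β ^ 2 * (u * v)) * ‖w - u • s‖ ^ 2
        + u * v * (α ^ 2 - δ * (u - v)) * ‖s‖ ^ 2 := by
    rw [norm_sub_smul_sq, norm_sub_smul_sq]
    field_simp
    ring
  have h₁ : 0 ≤ δ * (u - v) - β ^ 2 * (u * v) := by linarith
  have h₂ : 0 ≤ α ^ 2 - δ * (u - v) := by linarith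
  have : 0 ≤ (δ * (u - v) - β ^ 2 * (u * v)) * ‖w - u • s‖ ^ 2
      + u * v * (α ^ 2 - δ * (u - v)) * ‖s‖ ^ 2 := by positivity
  rw [← key] at this
  exact sub_nonneg.mp (nonneg_of_mul_nonneg_left this (by positivity))

theorem sum_sq_norm_sum_Ico_le {a c : ℕ → ℝ} {δ : ℝ} (ha : ∀ k, 0 < a k) (hc : ∀ k, 0 < c k)
    (hδ₀ : c 0 * a 0 ≤ δ)
    (hL : ∀ k, δ * (a k / c k - a (k + 1) / c (k + 1)) ≤ a k ^ 2)
    (hR : ∀ k, c (k + 1) ^ 2 * (a k / c k * (a (k + 1) / c (k + 1))) ≤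
      δ * (a k / c k - a (k + 1) / c (k + 1)))
    (x : ℕ → E) (N : ℕ) :
    ∑ j ∈ range N, c j ^ 2 * ‖∑ i ∈ Ico j N, a i • x i‖ ^ 2 ≤
      ∑ i ∈ range N, a i ^ 2 * ‖∑ j ∈ range (i + 1), c j • x j‖ ^ 2
        + δ * (a N / c N) * ‖∑ j ∈ range N, c j • x j‖ ^ 2 := by
  set u : ℕ → ℝ := fun k => a k / c k with hu_def
  set T : ℕ → E := fun k => ∑ i ∈ Ico k N, a i • x i with hT_def
  set S : ℕ → E := fun k => ∑ j ∈ range k, c j • x j with hS_def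
  have hu (k : ℕ) : 0 < u k := div_pos (ha k) (hc k)
  set Φ : ℕ → ℝ := fun k => δ / u k * ‖T k + u k • S k‖ ^ 2 - c k ^ 2 * ‖T k‖ ^ 2 with hΦ
  have step (k : ℕ) (hk : k < N) :
      Φ k - Φ (k + 1) ≤ a k ^ 2 * ‖S (k + 1)‖ ^ 2 - c k ^ 2 * ‖T k‖ ^ 2 := by
    have hT : T k = a k • x k + T (k + 1) := sum_eq_sum_Ico_succ_bot hk _
    have hS : S (k + 1) = S k + c k • x k := sum_range_succ _ _
    have ha_eq : a k = u k * c k := (div_mul_cancel₀ _ (hc k).ne').symm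
    have h₁ : T k + u k • S k - u k • S (k + 1) = T (k + 1) := by
      rw [hT, hS, ha_eq]; module
    have h₂ : T k + u k • S k - (u k - u (k + 1)) • S (k + 1) =
        T (k + 1) + u (k + 1) • S (k + 1) := by
      rw [hT, hS, ha_eq]; module
    have := quadratic_step (hu k) (hu (k + 1)) (hL k) (hR k) (T k + u k • S k) (S (k + 1))
    rw [h₁, h₂] at this
    simp only [hΦ]
    linarith
  have hΦ₀ : 0 ≤ Φ 0 := by
    have : c 0 ^ 2 ≤ δ / u 0 := by
      rw [le_div_iff₀ (hu 0)]
      calc c 0 ^ 2 * u 0 = c 0 * a 0 := by simp only [hu_def]; field_simp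
        _ ≤ δ := hδ₀
    simp only [hΦ, hS_def, range_zero, sum_empty, smul_zero, add_zero, ← sub_mul]
    exact mul_nonneg (sub_nonneg.mpr this) (sq_nonneg _)
  have hΦN : Φ N = δ * u N * ‖S N‖ ^ 2 := by
    simp only [hΦ, hT_def, Ico_self, sum_empty, zero_add, norm_zero, norm_smul,
      Real.norm_eq_abs, abs_of_pos (hu N)]
    field_simp [(hu N).ne']
    ring
  have htel := sum_le_sum fun k hk => step k (mem_range.mp hk)
  rw [sum_range_sub', sum_sub_distrib, hΦN] at htel
  linarith

end Quadratic

theorem lp.dense_setOf_eventually_eq_zero {α : Type*} {E : α → Type*}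
    [∀ i, NormedAddCommGroup (E i)] {p : ℝ≥0∞} [Fact (1 ≤ p)] (hp : p ≠ ⊤) :
    Dense {f : lp E p | ∀ᶠ i in cofinite, f i = 0} := by
  classical
  intro f
  refine mem_closure_of_tendsto (lp.hasSum_single hp f) (Eventually.of_forall fun s => ?_)
  filter_upwards [s.finite_toSet.compl_mem_cofinite] with i hi
  rw [Set.mem_compl_iff, mem_coe] at hi
  simp only [lp.coeFn_sum, lp.coeFn_single, Finset.sum_apply, sum_pi_single, hi, if_false]

theorem lp.hasSum_norm_sq {ι : Type*} {E : ι → Type*} [∀ i, NormedAddCommGroup (E i)]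
    (f : lp E 2) : HasSum (fun i => ‖f i‖ ^ 2) (‖f‖ ^ 2) := by
  simpa using lp.hasSum_norm (by norm_num) f

theorem le_tsum_of_sub_succ_le {f g : ℕ → ℝ} (hg : Tendsto g atTop (nhds 0)) (hf : Summable f)
    (h : ∀ k, g k - g (k + 1) ≤ f k) : g 0 ≤ ∑' k, f k := by
  refine le_of_tendsto_of_tendsto' (by simpa using tendsto_const_nhds.sub hg)
    hf.hasSum.tendsto_sum_nat fun n => ?_
  rw [← sum_range_sub']
  exact sum_le_sum fun k _ => h k

theorem ContinuousLinearMap.isPositive_adjoint_comp_sub_comp_adjoint {𝕜 E : Type*} [RCLike 𝕜]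
    [NormedAddCommGroup E] [InnerProductSpace 𝕜 E] [CompleteSpace E] (T : E →L[𝕜] E)
    (h : ∀ x, ‖adjoint T x‖ ≤ ‖T x‖) : (adjoint T ∘L T - T ∘L adjoint T).IsPositive := by
  rw [isPositive_def']
  refine ⟨(isPositive_adjoint_comp_self T).isSelfAdjoint.sub
    (isPositive_self_comp_adjoint T).isSelfAdjoint, fun x => ?_⟩
  have hT := apply_norm_sq_eq_inner_adjoint_left T x
  have hT' := apply_norm_sq_eq_inner_adjoint_left (adjoint T) x
  rw [adjoint_adjoint] at hT'
  rw [reApplyInnerSelf_apply, sub_apply, inner_sub_left, map_sub, ← hT, ← hT', sub_nonneg]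
  exact pow_le_pow_left₀ (norm_nonneg _) (h x) 2

lemma Complex.norm_ofReal_mul_sq (r : ℝ) (z : ℂ) : ‖(r : ℂ) * z‖ ^ 2 = r ^ 2 * ‖z‖ ^ 2 := by
  rw [norm_mul, mul_pow, Complex.norm_real, Real.norm_eq_abs, sq_abs]

def IsFactorable (M : ℓ²(ℕ, ℂ) →L[ℂ] ℓ²(ℕ, ℂ)) (a c : ℕ → ℝ) : Prop :=
  ∀ f i, M f i = (a i : ℂ) * ∑ j ∈ range (i + 1), (c j : ℂ) * f j

namespace IsFactorable

variable {M : ℓ²(ℕ, ℂ) →L[ℂ] ℓ²(ℕ, ℂ)} {a c : ℕ → ℝ} {x : ℓ²(ℕ, ℂ)} {N : ℕ}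

lemma apply_single (hM : IsFactorable M a c) (j i : ℕ) :
    M (lp.single 2 j 1) i = if j ≤ i then (a i * c j : ℂ) else 0 := by
  simp [hM _ i, Pi.single_apply]

lemma apply_of_le (hM : IsFactorable M a c) (hx : ∀ i, N ≤ i → x i = 0) {i : ℕ} (hi : N ≤ i) :
    M x i = a i * ∑ j ∈ range N, c j * x j := by
  rw [hM]
  congr 1
  refine (sum_subset (range_subset_range.mpr (by omega)) fun j _ hj => ?_).symm
  rw [hx j (by simpa using hj), mul_zero]

lemma adjoint_apply (hM : IsFactorable M a c) (hx : ∀ i, N ≤ i → x i = 0) (j : ℕ) :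
    adjoint M x j = c j * ∑ i ∈ Ico j N, a i * x i := by
  have hcoord : adjoint M x j = inner ℂ (lp.single 2 j (1 : ℂ)) (adjoint M x) := by
    simp [lp.inner_single_left]
  rw [hcoord, adjoint_inner_right, lp.inner_eq_tsum, tsum_eq_sum (s := Ico j N), mul_sum]
  · refine sum_congr rfl fun i hi => ?_
    simp only [hM.apply_single, (mem_Ico.mp hi).1, if_true, RCLike.inner_apply, map_mul,
      Complex.conj_ofReal]
    ring
  · intro i hi
    rw [mem_Ico, not_and_or, not_le, not_lt] at hi
    rcases hi with hji | hNi
    · simp [hM.apply_single, hji]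
    · simp [hx i hNi]

lemma norm_adjoint_apply_sq (hM : IsFactorable M a c) (hx : ∀ i, N ≤ i → x i = 0) :
    ‖adjoint M x‖ ^ 2 = ∑ j ∈ range N, c j ^ 2 * ‖∑ i ∈ Ico j N, (a i : ℂ) * x i‖ ^ 2 := by
  rw [← (lp.hasSum_norm_sq (adjoint M x)).tsum_eq, tsum_eq_sum (s := range N)]
  · refine sum_congr rfl fun j _ => ?_
    rw [hM.adjoint_apply hx, Complex.norm_ofReal_mul_sq]
  · intro j hj
    simp [hM.adjoint_apply hx, Ico_eq_empty_of_le (not_lt.mp (mem_range.not.mp hj))]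

lemma sum_add_le_norm_apply_sq (hM : IsFactorable M a c) (hx : ∀ i, N ≤ i → x i = 0) {δ : ℝ}
    (hL : ∀ k, δ * (a k / c k - a (k + 1) / c (k + 1)) ≤ a k ^ 2)
    (hlim : Tendsto (fun k => a k / c k) atTop (nhds 0)) :
    ∑ i ∈ range N, a i ^ 2 * ‖∑ j ∈ range (i + 1), (c j : ℂ) * x j‖ ^ 2
      + δ * (a N / c N) * ‖∑ j ∈ range N, (c j : ℂ) * x j‖ ^ 2 ≤ ‖M x‖ ^ 2 := by
  set S := ∑ j ∈ range N, (c j : ℂ) * x j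
  have hs := lp.hasSum_norm_sq (M x)
  rw [← hs.tsum_eq, ← hs.summable.sum_add_tsum_nat_add N]
  gcongr ?_ + ?_
  · refine (sum_congr rfl fun i _ => ?_).le
    rw [hM, Complex.norm_ofReal_mul_sq]
  · have hg : Tendsto (fun k => δ * (a (k + N) / c (k + N)) * ‖S‖ ^ 2) atTop (nhds 0) := by
      simpa using ((hlim.comp (tendsto_add_atTop_nat N)).const_mul δ).mul_const (‖S‖ ^ 2)
    have hstep (k : ℕ) : δ * (a (k + N) / c (k + N)) * ‖S‖ ^ 2
        - δ * (a (k + 1 + N) / c (k + 1 + N)) * ‖S‖ ^ 2 ≤ ‖M x (k + N)‖ ^ 2 := by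
      rw [hM.apply_of_le hx (Nat.le_add_left N k), Complex.norm_ofReal_mul_sq, ← sub_mul,
        ← mul_sub, add_right_comm]
      exact mul_le_mul_of_nonneg_right (hL (k + N)) (sq_nonneg _)
    simpa only [zero_add] using
      le_tsum_of_sub_succ_le hg ((summable_nat_add_iff N).mpr hs.summable) hstep

theorem norm_adjoint_apply_le (hM : IsFactorable M a c) (ha : ∀ k, 0 < a k) (hc : ∀ k, 0 < c k)
    {δ : ℝ} (hδ₀ : c 0 * a 0 ≤ δ)
    (hL : ∀ k, δ * (a k / c k - a (k + 1) / c (k + 1)) ≤ a k ^ 2)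
    (hR : ∀ k, c (k + 1) ^ 2 * (a k / c k * (a (k + 1) / c (k + 1))) ≤
      δ * (a k / c k - a (k + 1) / c (k + 1)))
    (hlim : Tendsto (fun k => a k / c k) atTop (nhds 0)) (x : ℓ²(ℕ, ℂ)) :
    ‖adjoint M x‖ ≤ ‖M x‖ := by
  refine (lp.dense_setOf_eventually_eq_zero (by simp)).induction (fun y hy => ?_)
    (isClosed_le (adjoint M).continuous.norm M.continuous.norm) x
  rw [Set.mem_ofPred_eq, Nat.cofinite_eq_atTop, eventually_atTop] at hy
  obtain ⟨N, hN⟩ := hy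
  have key := sum_sq_norm_sum_Ico_le ha hc hδ₀ hL hR (fun i => y i) N
  simp only [Complex.real_smul] at key
  rw [← pow_le_pow_iff_left₀ (norm_nonneg _) (norm_nonneg _) two_ne_zero,
    hM.norm_adjoint_apply_sq hN]
  linarith [hM.sum_add_le_norm_apply_sq hN hL hlim]

end IsFactorable

theorem factorable_hyponormal_general
    (a c : ℕ → ℝ) (ha : ∀ i, 0 < a i) (hc : ∀ j, 0 < c j)
    (hlim : Tendsto (fun k => a k / c k) atTop (nhds 0))
    (δ : ℝ) (hδ : 0 < δ) (hδ0 : c 0 * a 0 ≤ δ)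
    (hineq : ∀ k : ℕ,
      (1 / δ) * (a k / c k) * (δ - c k * a k) ≤ a (k + 1) / c (k + 1) ∧
      a (k + 1) / c (k + 1) ≤ δ * (a k / c k) / (δ + (c (k + 1)) ^ 2 * (a k / c k)))
    (M : lp (fun _ : ℕ => ℂ) 2 →L[ℂ] lp (fun _ : ℕ => ℂ) 2)
    (hM : ∀ f : lp (fun _ : ℕ => ℂ) 2, ∀ i : ℕ,
      M f i = (a i : ℂ) * ∑ j ∈ Finset.range (i + 1), (c j : ℂ) * f j) :
    (adjoint M ∘L M - M ∘L adjoint M).IsPositive := by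
  have hL (k : ℕ) : δ * (a k / c k - a (k + 1) / c (k + 1)) ≤ a k ^ 2 := by
    have h := (hineq k).1
    have e : 1 / δ * (a k / c k) * (δ - c k * a k) = a k / c k - a k ^ 2 / δ := by
      field_simp [(hc k).ne']
    rw [e, sub_le_comm, le_div_iff₀ hδ] at h
    linarith
  have hR (k : ℕ) : c (k + 1) ^ 2 * (a k / c k * (a (k + 1) / c (k + 1))) ≤
      δ * (a k / c k - a (k + 1) / c (k + 1)) := by
    have h := (hineq k).2
    rw [le_div_iff₀ (by have := div_pos (ha k) (hc k); positivity)] at h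
    linarith
  exact isPositive_adjoint_comp_sub_comp_adjoint M
    (IsFactorable.norm_adjoint_apply_le hM ha hc hδ0 hL hR hlim)

/-- Sufficient conditions for hyponormality of a bounded factorable matrix. -/
theorem factorable_hyponormal
    (a c : ℕ → ℝ) (ha : ∀ i, 0 < a i) (hc : ∀ j, 0 < c j)
    (hdec : StrictAnti fun k => a k / c k)
    (hlim : Tendsto (fun k => a k / c k) atTop (nhds 0))
    (hbdd : ∃ B : ℝ, ∀ k : ℕ, a k * c k / (a (k + 1) * c (k + 1)) ≤ B)
    (δ : ℝ) (hδ : 0 < δ) (hδ0 : c 0 * a 0 ≤ δ)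
    (hineq : ∀ k : ℕ,
      (1 / δ) * (a k / c k) * (δ - c k * a k) ≤ a (k + 1) / c (k + 1) ∧
      a (k + 1) / c (k + 1) ≤ δ * (a k / c k) / (δ + (c (k + 1)) ^ 2 * (a k / c k)))
    (M : lp (fun _ : ℕ => ℂ) 2 →L[ℂ] lp (fun _ : ℕ => ℂ) 2)
    (hM : ∀ f : lp (fun _ : ℕ => ℂ) 2, ∀ i : ℕ,
      M f i = (a i : ℂ) * ∑ j ∈ Finset.range (i + 1), (c j : ℂ) * f j) :
    (adjoint M ∘L M - M ∘L adjoint M).IsPositive :=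
  factorable_hyponormal_general a c ha hc hlim δ hδ hδ0 hineq M hM
end
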